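/- Let p ≥ 3 be prime and suppose for each k ∈ N we are given α_k, β_k, γ_k ∈ Q_p with |α_k|_p, |β_k|_p, |γ_k|_p ≤ 1/p; set a_k = exp_p(α_k), b_k = exp_p(β_k), c_k = exp_p(γ_k), f_k(x) = (a_k x + b_k)/(c_k + x). If two sequences (u_n) and (v_n) in the set D = {z : |z|_p = 1, |z − 1|_p ≤ 1/p} both satisfy the recursion u_n = f_{n+1}(u_{n+1}) · f_{n+2}(u_{n+2}) for all n ∈ N, then |u_n − v_n|_p ≤ (1/p) · max{|u_{n+1} − v_{n+1}|_p, |u_{n+2} − v_{n+2}|_p} for all n. -/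

import Mathlib

/-!
Since `‖x ^ n / n!‖ ≤ p ^ (v_p(n!) - n)` and `2 v_p(n!) ≤ n` for `p ≥ 3`, every term of the
exponential series past the first has norm `≤ 1/p`, so `a_k, b_k, c_k ≡ 1` modulo `p`. For `x ≡ 1`
the denominator `c_k + x ≡ 2` is a unit, hence `‖f_k(x)‖ ≤ 1`, and
`f_k(x) - f_k(y) = (a_k c_k - b_k)(x - y) / ((c_k + x)(c_k + y))` with `a_k c_k - b_k ≡ 0`.
Splitting `s t - s' t' = s (t - t') + (s - s') t'` for the two factors of the recursion, the
ultrametric inequality gives the contraction.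
-/

noncomputable def pexp (p : ℕ) [Fact p.Prime] (x : ℚ_[p]) : ℚ_[p] :=
  NormedSpace.exp x

noncomputable def plog (p : ℕ) [Fact p.Prime] (z : ℚ_[p]) : ℚ_[p] :=
  ∑' n : ℕ, (-1) ^ n * (z - 1) ^ (n + 1) / (n + 1)

open IsUltrametricDist Filter
open scoped Nat

lemma moebius_sub_moebius {K : Type*} [Field K] {a b c x y : K} (hx : c + x ≠ 0)
    (hy : c + y ≠ 0) :
    (a * x + b) / (c + x) - (a * y + b) / (c + y) =
      (a * c - b) * (x - y) / ((c + x) * (c + y)) := by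
  field_simp
  ring

section Ultrametric

lemma norm_mul_sub_mul_le_max {R : Type*} [NormedRing R] [IsUltrametricDist R] {s t s' t' : R}
    (hs : ‖s‖ ≤ 1) (ht' : ‖t'‖ ≤ 1) : ‖s * t - s' * t'‖ ≤ max ‖s - s'‖ ‖t - t'‖ := by
  have hsplit : s * t - s' * t' = s * (t - t') + (s - s') * t' := by noncomm_ring
  rw [hsplit, max_comm]
  refine (norm_add_le_max _ _).trans (max_le_max ?_ ?_)
  · exact (norm_mul_le _ _).trans (mul_le_of_le_one_left (norm_nonneg _) hs)
  · exact (norm_mul_le _ _).trans (mul_le_of_le_one_right (norm_nonneg _) ht')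

variable {K : Type*} [NormedField K] [IsUltrametricDist K]

lemma norm_le_one_of_norm_sub_one_le_one {z : K} (h : ‖z - 1‖ ≤ 1) : ‖z‖ ≤ 1 := by
  simpa [max_eq_right h] using norm_add_one_le_max_norm_one (z - 1)

lemma norm_add_eq_one_of_norm_sub_one_lt (h2 : ‖(2 : K)‖ = 1) {c x : K}
    (hc : ‖c - 1‖ < 1) (hx : ‖x - 1‖ < 1) : ‖c + x‖ = 1 := by
  have hsmall : ‖(c - 1) + (x - 1)‖ < ‖(2 : K)‖ :=
    h2 ▸ (norm_add_le_max _ _).trans_lt (max_lt hc hx)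
  calc ‖c + x‖ = ‖(c - 1) + (x - 1) + 2‖ := by ring_nf
    _ = 1 := by rw [norm_add_eq_max_of_norm_ne_norm hsmall.ne, max_eq_right hsmall.le, h2]

variable {a b c x y : K}

lemma norm_moebius_le_one (h2 : ‖(2 : K)‖ = 1) (ha : ‖a - 1‖ < 1) (hb : ‖b - 1‖ < 1)
    (hc : ‖c - 1‖ < 1) (hx : ‖x - 1‖ < 1) : ‖(a * x + b) / (c + x)‖ ≤ 1 := by
  rw [norm_div, norm_add_eq_one_of_norm_sub_one_lt h2 hc hx, div_one]
  refine (norm_add_le_max _ _).trans (max_le ?_ (norm_le_one_of_norm_sub_one_le_one hb.le))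
  rw [norm_mul]
  exact mul_le_one₀ (norm_le_one_of_norm_sub_one_le_one ha.le) (norm_nonneg _)
    (norm_le_one_of_norm_sub_one_le_one hx.le)

lemma norm_moebius_sub_moebius_le (h2 : ‖(2 : K)‖ = 1) {r : ℝ} (hr : r < 1)
    (ha : ‖a - 1‖ ≤ r) (hb : ‖b - 1‖ ≤ r) (hc : ‖c - 1‖ ≤ r) (hx : ‖x - 1‖ < 1)
    (hy : ‖y - 1‖ < 1) :
    ‖(a * x + b) / (c + x) - (a * y + b) / (c + y)‖ ≤ r * ‖x - y‖ := by
  have hcx := norm_add_eq_one_of_norm_sub_one_lt h2 (hc.trans_lt hr) hx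
  have hcy := norm_add_eq_one_of_norm_sub_one_lt h2 (hc.trans_lt hr) hy
  have hdet : ‖a * c - b‖ ≤ r := by
    have hsplit : a * c - b = a * (c - 1) + ((a - 1) + (1 - b)) := by ring
    rw [hsplit]
    refine (norm_add_le_max _ _).trans (max_le ?_ ((norm_add_le_max _ _).trans
      (max_le ha (norm_sub_rev 1 b ▸ hb))))
    rw [norm_mul]
    exact mul_le_of_le_one_left (norm_nonneg _)
      (norm_le_one_of_norm_sub_one_le_one (ha.trans hr.le)) |>.trans hc
  rw [moebius_sub_moebius (norm_ne_zero_iff.1 (by simp [hcx]))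
    (norm_ne_zero_iff.1 (by simp [hcy])), norm_div, norm_mul, norm_mul, hcx, hcy, mul_one, div_one]
  exact mul_le_mul_of_nonneg_right hdet (norm_nonneg _)

end Ultrametric

section PadicExp

variable {p : ℕ} [Fact p.Prime]

lemma two_mul_padicValNat_factorial_le (hp : 3 ≤ p) (n : ℕ) : 2 * padicValNat p n ! ≤ n := by
  have hlegendre := sub_one_mul_padicValNat_factorial (p := p) n
  have : 2 * padicValNat p n ! ≤ (p - 1) * padicValNat p n ! := Nat.mul_le_mul_right _ (by omega)
  omega

lemma Padic.norm_natCast_eq_inv_pow {n : ℕ} (hn : n ≠ 0) :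
    ‖(n : ℚ_[p])‖ = (p : ℝ)⁻¹ ^ padicValNat p n := by
  rw [Padic.norm_eq_zpow_neg_valuation (Nat.cast_ne_zero.2 hn), Padic.valuation_natCast, zpow_neg,
    zpow_natCast, inv_pow]

lemma Padic.norm_two_eq_one (hp : 3 ≤ p) : ‖(2 : ℚ_[p])‖ = 1 := by
  have hcop : p.Coprime 2 := (Nat.coprime_primes Fact.out Nat.prime_two).2 (by omega)
  exact_mod_cast Padic.norm_natCast_eq_one_iff.2 hcop

lemma norm_pow_div_factorial_le {x : ℚ_[p]} (hx : ‖x‖ ≤ (p : ℝ)⁻¹) (n : ℕ) :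
    ‖x ^ n / (n ! : ℚ_[p])‖ ≤ (p : ℝ)⁻¹ ^ (n - padicValNat p n !) := by
  have hval : padicValNat p n ! ≤ n := by
    rcases eq_or_ne n 0 with rfl | hn
    · simp
    · exact (padicValNat_factorial_lt_of_ne_zero p hn).le
  rw [norm_div, norm_pow, Padic.norm_natCast_eq_inv_pow (Nat.factorial_ne_zero n),
    pow_sub₀ _ (by simp [(Fact.out : p.Prime).ne_zero]) hval, div_eq_mul_inv]
  gcongr

lemma summable_pow_div_factorial (hp : 3 ≤ p) {x : ℚ_[p]} (hx : ‖x‖ ≤ (p : ℝ)⁻¹) :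
    Summable fun n : ℕ ↦ x ^ n / n ! := by
  refine NonarchimedeanAddGroup.summable_of_tendsto_cofinite_zero ?_
  rw [Nat.cofinite_eq_atTop]
  have hexponent : Tendsto (fun n ↦ n - padicValNat p n !) atTop atTop :=
    tendsto_atTop_atTop.2 fun m ↦ ⟨2 * m, fun n hn ↦ by
      have := two_mul_padicValNat_factorial_le hp n
      omega⟩
  refine squeeze_zero_norm (norm_pow_div_factorial_le hx) ?_
  exact (tendsto_pow_atTop_nhds_zero_of_lt_one (by positivity)
    (inv_lt_one_of_one_lt₀ (by exact_mod_cast (Fact.out : p.Prime).one_lt))).comp hexponent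

lemma norm_pexp_sub_one_le (hp : 3 ≤ p) {x : ℚ_[p]} (hx : ‖x‖ ≤ (p : ℝ)⁻¹) :
    ‖pexp p x - 1‖ ≤ (p : ℝ)⁻¹ := by
  have htail : pexp p x - 1 = ∑' n : ℕ, x ^ (n + 1) / (n + 1)! := by
    rw [pexp, NormedSpace.exp_eq_tsum_div]
    dsimp only
    rw [(summable_pow_div_factorial hp hx).tsum_eq_zero_add]
    simp
  rw [htail]
  refine norm_tsum_le_of_forall_le_of_nonneg (by positivity) fun n ↦ ?_
  refine (norm_pow_div_factorial_le hx (n + 1)).trans (pow_le_of_le_one (by positivity)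
    (inv_le_one_of_one_le₀ (by exact_mod_cast (Fact.out : p.Prime).one_lt.le)) ?_)
  have := two_mul_padicValNat_factorial_le hp (n + 1)
  omega

end PadicExp

theorem stmt9 (p : ℕ) [Fact p.Prime] (hp : 3 ≤ p) (α β γ : ℕ → ℚ_[p])
    (hα : ∀ k, ‖α k‖ ≤ (p : ℝ)⁻¹) (hβ : ∀ k, ‖β k‖ ≤ (p : ℝ)⁻¹) (hγ : ∀ k, ‖γ k‖ ≤ (p : ℝ)⁻¹)
    (a b c : ℕ → ℚ_[p]) (ha : ∀ k, a k = pexp p (α k)) (hb : ∀ k, b k = pexp p (β k))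
    (hc : ∀ k, c k = pexp p (γ k))
    (f : ℕ → ℚ_[p] → ℚ_[p]) (hf : ∀ k x, f k x = (a k * x + b k) / (c k + x))
    (u v : ℕ → ℚ_[p])
    (hu : ∀ n, ‖u n‖ = 1 ∧ ‖u n - 1‖ ≤ (p : ℝ)⁻¹)
    (hv : ∀ n, ‖v n‖ = 1 ∧ ‖v n - 1‖ ≤ (p : ℝ)⁻¹)
    (hru : ∀ n, u n = f (n + 1) (u (n + 1)) * f (n + 2) (u (n + 2)))
    (hrv : ∀ n, v n = f (n + 1) (v (n + 1)) * f (n + 2) (v (n + 2))) :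
    ∀ n, ‖u n - v n‖ ≤ (p : ℝ)⁻¹ * max ‖u (n + 1) - v (n + 1)‖ ‖u (n + 2) - v (n + 2)‖ := by
  have hp1 : (p : ℝ)⁻¹ < 1 := inv_lt_one_of_one_lt₀ (by exact_mod_cast (Fact.out : p.Prime).one_lt)
  have h2 := Padic.norm_two_eq_one hp
  have hA k : ‖a k - 1‖ ≤ (p : ℝ)⁻¹ := ha k ▸ norm_pexp_sub_one_le hp (hα k)
  have hB k : ‖b k - 1‖ ≤ (p : ℝ)⁻¹ := hb k ▸ norm_pexp_sub_one_le hp (hβ k)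
  have hC k : ‖c k - 1‖ ≤ (p : ℝ)⁻¹ := hc k ▸ norm_pexp_sub_one_le hp (hγ k)
  have hf_le_one k x (hx : ‖x - 1‖ ≤ (p : ℝ)⁻¹) : ‖f k x‖ ≤ 1 := hf k x ▸
    norm_moebius_le_one h2 ((hA k).trans_lt hp1) ((hB k).trans_lt hp1) ((hC k).trans_lt hp1)
      (hx.trans_lt hp1)
  have hf_contract k x y (hx : ‖x - 1‖ ≤ (p : ℝ)⁻¹) (hy : ‖y - 1‖ ≤ (p : ℝ)⁻¹) :
      ‖f k x - f k y‖ ≤ (p : ℝ)⁻¹ * ‖x - y‖ := by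
    rw [hf, hf]
    exact norm_moebius_sub_moebius_le h2 hp1 (hA k) (hB k) (hC k) (hx.trans_lt hp1)
      (hy.trans_lt hp1)
  intro n
  rw [hru, hrv, mul_max_of_nonneg _ _ (by positivity)]
  exact (norm_mul_sub_mul_le_max (hf_le_one _ _ (hu _).2) (hf_le_one _ _ (hv _).2)).trans
    (max_le_max (hf_contract _ _ _ (hu _).2 (hv _).2) (hf_contract _ _ _ (hu _).2 (hv _).2))
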